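/- arXiv:1408.3024 — 2 statements merged into one kernel-verified Lean document; each statement's English description precedes it below -/
import Mathlib

section
/- Any surjective group homomorphism from a finite direct product G_1 × ... × G_{n+1} of nonabelian finite simple groups onto a finite simple group S that kills some element g with nontrivial last coordinate must be trivial on the last factor, i.e., it factors through the projection onto the first n factors. -/
/-!
The image under `β` of the last factor is normal in `S`, so it is trivial or all of `S`.
If it were all of `S`, then `β` would restrict to an isomorphism from the last factor onto `S`,
so `S` would be nonabelian with trivial center; but the other factors commute with the last
one, so `β` would send them into the center, i.e. kill them, and `β g = 1` would force the last
coordinate of `g` to be trivial.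
-/

namespace Pi

variable {ι : Type*} [DecidableEq ι] {G : ι → Type*} [∀ i, Group (G i)]

theorem mulSingle_conj (x : ∀ i, G i) (i : ι) (h : G i) :
    x * mulSingle i h * x⁻¹ = mulSingle i (x i * h * (x i)⁻¹) := by
  funext j
  by_cases hj : j = i
  · subst hj; simp
  · simp [hj]

theorem normal_range_mulSingle (i : ι) : (MonoidHom.mulSingle G i).range.Normal :=
  ⟨by rintro _ ⟨h, rfl⟩ x; exact ⟨_, (mulSingle_conj x i h).symm⟩⟩

theorem commute_mulSingle_of_apply_eq_one {i : ι} {y : ∀ i, G i} (hy : y i = 1) (h : G i) :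
    Commute (mulSingle i h) y := by
  funext j
  by_cases hj : j = i
  · subst hj; simp [hy]
  · simp [hj]

end Pi

theorem MonoidHom.injective_of_surjective_of_isSimpleGroup {H S : Type*} [Group H] [Group S]
    [IsSimpleGroup H] [Nontrivial S] (f : H →* S) (hf : Function.Surjective f) :
    Function.Injective f := by
  refine (f.normal_ker.eq_bot_or_eq_top).elim f.ker_eq_bot_iff.mp fun htop => ?_
  obtain ⟨s, hs⟩ := exists_ne (1 : S)
  obtain ⟨h, rfl⟩ := hf s
  exact absurd (f.mem_ker.mp (htop ▸ Subgroup.mem_top h)) hs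

theorem Subgroup.center_eq_bot_of_isSimpleGroup {S : Type*} [Group S] [IsSimpleGroup S]
    (hnonab : ∃ a b : S, a * b ≠ b * a) : center S = ⊥ := by
  refine (center S).normal_of_characteristic.eq_bot_or_eq_top.resolve_right fun htop => ?_
  obtain ⟨a, b, hab⟩ := hnonab
  exact hab (Subgroup.mem_center_iff.mp (htop ▸ mem_top b) a)

namespace MonoidHom

section Pi

variable {ι : Type*} [DecidableEq ι] {G : ι → Type*} [∀ i, Group (G i)] {S : Type*} [Group S]

theorem map_mem_center_of_surjective_comp_mulSingle (β : (∀ i, G i) →* S) {i : ι}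
    (hsurj : Function.Surjective (β.comp (MonoidHom.mulSingle G i))) {y : ∀ i, G i}
    (hy : y i = 1) : β y ∈ Subgroup.center S := by
  refine Subgroup.mem_center_iff.mpr fun s => ?_
  obtain ⟨h, rfl⟩ := hsurj s
  simp only [comp_apply, mulSingle_apply, ← map_mul, (Pi.commute_mulSingle_of_apply_eq_one hy h).eq]

theorem map_mulSingle_eq_one_of_map_eq_one [IsSimpleGroup S] {i : ι} [IsSimpleGroup (G i)]
    (hnonab : ∃ a b : G i, a * b ≠ b * a) (β : (∀ i, G i) →* S) (hβ : Function.Surjective β)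
    {g : ∀ i, G i} (hg : β g = 1) (hgi : g i ≠ 1) (h : G i) : β (Pi.mulSingle i h) = 1 := by
  set φ := β.comp (MonoidHom.mulSingle G i)
  have hnormal : φ.range.Normal := by
    rw [range_comp]
    exact (Pi.normal_range_mulSingle i).map β hβ
  rcases hnormal.eq_bot_or_eq_top with hbot | htop
  · rw [← Subgroup.mem_bot, ← hbot]
    exact ⟨h, rfl⟩
  have hφsurj : Function.Surjective φ := range_eq_top.mp htop
  have hφinj := φ.injective_of_surjective_of_isSimpleGroup hφsurj
  have hcenter : Subgroup.center S = ⊥ := by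
    obtain ⟨a, b, hab⟩ := hnonab
    refine Subgroup.center_eq_bot_of_isSimpleGroup ⟨φ a, φ b, fun h => hab (hφinj ?_)⟩
    simpa only [map_mul] using h
  -- `g = y * mulSingle i (g i)` with `y i = 1`, and `β y` is central, hence trivial.
  set y := g / Pi.mulSingle i (g i)
  have hy : β y = 1 := by
    rw [← Subgroup.mem_bot, ← hcenter]
    exact β.map_mem_center_of_surjective_comp_mulSingle hφsurj (by simp [y])
  have hφg : φ (g i) = 1 :=
    calc φ (g i) = β y * β (Pi.mulSingle i (g i)) := by rw [hy, one_mul]; rfl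
      _ = 1 := by rw [← map_mul, div_mul_cancel, hg]
  exact absurd (hφinj (hφg.trans φ.map_one.symm)) hgi

end Pi

section Fin

variable {n : ℕ} {G : Fin (n + 1) → Type*} [∀ i, Group (G i)]

variable (G) in
def finSnocOne : (∀ i : Fin n, G i.castSucc) →* ∀ i, G i where
  toFun y := Fin.snoc y 1
  map_one' := by
    funext j
    refine Fin.lastCases ?_ (fun i => ?_) j <;> simp
  map_mul' y z := by
    funext j
    refine Fin.lastCases ?_ (fun i => ?_) j <;> simp

theorem finSnocOne_init_mul_mulSingle_last (x : ∀ i, G i) :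
    finSnocOne G (Fin.init x) * Pi.mulSingle (Fin.last n) (x (Fin.last n)) = x := by
  funext j
  refine Fin.lastCases ?_ (fun i => ?_) j
  · simp [finSnocOne]
  · simp [finSnocOne, (Fin.castSucc_lt_last i).ne, Fin.init]

theorem exists_eq_comp_init_of_map_mulSingle_last {M : Type*} [Monoid M]
    (β : (∀ i, G i) →* M) (hβ : ∀ h : G (Fin.last n), β (Pi.mulSingle (Fin.last n) h) = 1) :
    ∃ β' : (∀ i : Fin n, G i.castSucc) →* M, ∀ x, β x = β' (Fin.init x) := by
  refine ⟨β.comp (finSnocOne G), fun x => ?_⟩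
  conv_lhs => rw [← finSnocOne_init_mul_mulSingle_last x]
  rw [map_mul, hβ, mul_one, comp_apply]

end Fin

end MonoidHom

theorem epi_killing_last_coordinate_is_trivial_on_last_factor_general
    (n : ℕ) (G : Fin (n + 1) → Type) [∀ i, Group (G i)]
    [∀ i, IsSimpleGroup (G i)]
    (hnonab : ∀ i, ∃ a b : G i, a * b ≠ b * a)
    (S : Type) [Group S] [IsSimpleGroup S]
    (β : (∀ i, G i) →* S) (hβ : Function.Surjective β)
    (g : ∀ i, G i) (hg : β g = 1) (hglast : g (Fin.last n) ≠ 1) :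
    (∀ h : G (Fin.last n), β (Pi.mulSingle (Fin.last n) h) = 1) ∧
      ∃ β' : (∀ i : Fin n, G i.castSucc) →* S,
        ∀ x : ∀ i, G i, β x = β' (fun i => x i.castSucc) := by
  have hlast := β.map_mulSingle_eq_one_of_map_eq_one (hnonab _) hβ hg hglast
  exact ⟨hlast, β.exists_eq_comp_init_of_map_mulSingle_last hlast⟩

theorem epi_killing_last_coordinate_is_trivial_on_last_factor
    (n : ℕ) (G : Fin (n + 1) → Type) [∀ i, Group (G i)] [∀ i, Finite (G i)]
    [∀ i, IsSimpleGroup (G i)]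
    (hnonab : ∀ i, ∃ a b : G i, a * b ≠ b * a)
    (S : Type) [Group S] [Finite S] [IsSimpleGroup S]
    (β : (∀ i, G i) →* S) (hβ : Function.Surjective β)
    (g : ∀ i, G i) (hg : β g = 1) (hglast : g (Fin.last n) ≠ 1) :
    (∀ h : G (Fin.last n), β (Pi.mulSingle (Fin.last n) h) = 1) ∧
      ∃ β' : (∀ i : Fin n, G i.castSucc) →* S,
        ∀ x : ∀ i, G i, β x = β' (fun i => x i.castSucc) :=
  epi_killing_last_coordinate_is_trivial_on_last_factor_general n G hnonab S β hβ g hg hglast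
end

section
/- Let ρ_1, ρ_2 : Δ → SL(2,R) be two homomorphisms such that no element of ρ_1(Δ) or ρ_2(Δ) other than ±1 has trace 0, and such that ε : Δ → {±1} defined by tr ρ_1(γ) = ε(γ) tr ρ_2(γ) is well-defined (all traces nonzero). If ε(γ) = ε(δ) = 1, then ε(γδ) = 1 and ε(γδ^{-1}) = 1. -/
/-!
Write `a, b` for the `ρ₂`-traces of `γδ` and `γδ⁻¹`. The identity `tr(AB) + tr(AB⁻¹) = tr A tr B`
in `SL(2)`, applied to both representations, gives `ε(γδ) a + ε(γδ⁻¹) b = a + b`, since both right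
hand sides equal `tr ρ₂ γ · tr ρ₂ δ`. A sign `-1` would then force `b`, `a` or `a + b` to vanish.
-/

open Matrix
open scoped MatrixGroups

namespace Matrix.SpecialLinearGroup

theorem trace_mul_add_trace_mul_inv {R : Type*} [CommRing R] (A B : SL(2, R)) :
    trace ((A * B : SL(2, R)) : Matrix (Fin 2) (Fin 2) R) +
        trace ((A * B⁻¹ : SL(2, R)) : Matrix (Fin 2) (Fin 2) R) =
      trace (A : Matrix (Fin 2) (Fin 2) R) * trace (B : Matrix (Fin 2) (Fin 2) R) := by
  simp only [coe_mul, coe_inv, adjugate_fin_two, trace_fin_two, mul_apply, Fin.sum_univ_two,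
    of_apply, cons_val', cons_val_zero, cons_val_one, empty_val', cons_val_fin_one]
  ring

end Matrix.SpecialLinearGroup

theorem MonoidHom.trace_map_mul_add_trace_map_mul_inv {G R : Type*} [Group G] [CommRing R]
    (ρ : G →* SL(2, R)) (g h : G) :
    trace (ρ (g * h) : Matrix (Fin 2) (Fin 2) R) + trace (ρ (g * h⁻¹) : Matrix (Fin 2) (Fin 2) R) =
      trace (ρ g : Matrix (Fin 2) (Fin 2) R) * trace (ρ h : Matrix (Fin 2) (Fin 2) R) := by
  rw [map_mul, map_mul, map_inv, SpecialLinearGroup.trace_mul_add_trace_mul_inv]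

theorem eq_one_and_eq_one_of_mul_add_mul_eq_add {K : Type*} [Field K] [CharZero K] {s t a b : K}
    (hs : s = 1 ∨ s = -1) (ht : t = 1 ∨ t = -1) (ha : a ≠ 0) (hb : b ≠ 0) (hab : a + b ≠ 0)
    (h : s * a + t * b = a + b) : s = 1 ∧ t = 1 := by
  rcases hs with rfl | rfl <;> rcases ht with rfl | rfl
  · exact ⟨rfl, rfl⟩
  · exact absurd (by linear_combination (-1 / 2 : K) * h) hb
  · exact absurd (by linear_combination (-1 / 2 : K) * h) ha
  · exact absurd (by linear_combination (-1 / 2 : K) * h) hab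

theorem epsilon_multiplicative_step_general
    (Δ : Type) [Group Δ]
    (ρ₁ ρ₂ : Δ →* Matrix.SpecialLinearGroup (Fin 2) ℝ)
    (htr₂ : ∀ γ : Δ, Matrix.trace ((ρ₂ γ : Matrix (Fin 2) (Fin 2) ℝ)) ≠ 0)
    (ε : Δ → ℝ)
    (hval : ∀ γ : Δ, ε γ = 1 ∨ ε γ = -1)
    (hε : ∀ γ : Δ, Matrix.trace ((ρ₁ γ : Matrix (Fin 2) (Fin 2) ℝ)) =
        ε γ * Matrix.trace ((ρ₂ γ : Matrix (Fin 2) (Fin 2) ℝ)))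
    (γ δ : Δ) (hγ : ε γ = 1) (hδ : ε δ = 1) :
    ε (γ * δ) = 1 ∧ ε (γ * δ⁻¹) = 1 := by
  have hsum₂ := ρ₂.trace_map_mul_add_trace_map_mul_inv γ δ
  refine eq_one_and_eq_one_of_mul_add_mul_eq_add (hval _) (hval _) (htr₂ _) (htr₂ _)
    (hsum₂ ▸ mul_ne_zero (htr₂ γ) (htr₂ δ)) ?_
  rw [← hε, ← hε, ρ₁.trace_map_mul_add_trace_map_mul_inv, hε γ, hε δ, hγ, hδ, one_mul, one_mul,
    hsum₂]

theorem epsilon_multiplicative_step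
    (Δ : Type) [Group Δ]
    (ρ₁ ρ₂ : Δ →* Matrix.SpecialLinearGroup (Fin 2) ℝ)
    (htr₁ : ∀ γ : Δ, Matrix.trace ((ρ₁ γ : Matrix (Fin 2) (Fin 2) ℝ)) ≠ 0)
    (htr₂ : ∀ γ : Δ, Matrix.trace ((ρ₂ γ : Matrix (Fin 2) (Fin 2) ℝ)) ≠ 0)
    (ε : Δ → ℝ)
    (hval : ∀ γ : Δ, ε γ = 1 ∨ ε γ = -1)
    (hε : ∀ γ : Δ, Matrix.trace ((ρ₁ γ : Matrix (Fin 2) (Fin 2) ℝ)) =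
        ε γ * Matrix.trace ((ρ₂ γ : Matrix (Fin 2) (Fin 2) ℝ)))
    (γ δ : Δ) (hγ : ε γ = 1) (hδ : ε δ = 1) :
    ε (γ * δ) = 1 ∧ ε (γ * δ⁻¹) = 1 :=
  epsilon_multiplicative_step_general Δ ρ₁ ρ₂ htr₂ ε hval hε γ δ hγ hδ
end
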